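/- arXiv:2410.21981 — 3 statements merged into one kernel-verified Lean document; each statement's English description precedes it below -/
import Mathlib

section
/- Let λ ≥ λ₁ > 0 and let I(t) = ∫₀ᵗ e^{-λ(t−s)} (∫₀ˢ e^{-λ(s−r) − λ₁ r} dr) ds. Then there exists a constant C (depending only on λ₁, and not on λ or t) such that I(t) ≤ C λ^{-2} e^{-λ₁ t / 2} for all t ≥ 0. -/
open intervalIntegral Real

/-- For `c > 0` and `0 ≤ u`, `∫₀ᵘ e^{-c(u-x)} dx = (1 - e^{-cu})/c ≤ 1/c`. -/
lemma aux_exp_int (c u : ℝ) (hc : 0 < c) (hu : 0 ≤ u) :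
    ∫ x in (0:ℝ)..u, Real.exp (-(c * (u - x))) ≤ c⁻¹ := by
  have h1 : (∫ x in (0:ℝ)..u, Real.exp (-(c * (u - x))))
      = Real.exp (-(c * u)) * ∫ x in (0:ℝ)..u, Real.exp (c * x) := by
    rw [← intervalIntegral.integral_const_mul]
    congr 1; ext x
    rw [← Real.exp_add]; ring_nf
  have h2 : (∫ x in (0:ℝ)..u, Real.exp (c * x))
      = c⁻¹ * (Real.exp (c * u) - 1) := by
    rw [intervalIntegral.integral_comp_mul_left (fun x => Real.exp x) hc.ne']
    simp [integral_exp, smul_eq_mul]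
  rw [h1, h2]
  have h3 : Real.exp (-(c * u)) * (Real.exp (c * u) - 1)
      = 1 - Real.exp (-(c * u)) := by
    rw [mul_sub, ← Real.exp_add]; simp
  calc Real.exp (-(c * u)) * (c⁻¹ * (Real.exp (c * u) - 1))
      = c⁻¹ * (1 - Real.exp (-(c * u))) := by rw [← h3]; ring
    _ ≤ c⁻¹ * 1 := by
        apply mul_le_mul_of_nonneg_left _ (by positivity)
        have := Real.exp_pos (-(c * u)); linarith
    _ = c⁻¹ := mul_one _

theorem stmt_2 (lam₁ : ℝ) (hlam₁ : 0 < lam₁) :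
    ∃ C : ℝ, ∀ lam : ℝ, lam₁ ≤ lam → ∀ t : ℝ, 0 ≤ t →
      (∫ s in (0:ℝ)..t, Real.exp (-lam * (t - s)) *
          ∫ r in (0:ℝ)..s, Real.exp (-lam * (s - r) - lam₁ * r)) ≤
        C * lam⁻¹ ^ 2 * Real.exp (-lam₁ * t / 2) := by
  refine ⟨4, fun lam hlam t ht => ?_⟩
  have hlam0 : 0 < lam := hlam₁.trans_le hlam
  have hl2 : (0:ℝ) < lam / 2 := by linarith
  -- inner bound
  have inner_bd : ∀ s : ℝ, 0 ≤ s →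
      (∫ r in (0:ℝ)..s, Real.exp (-lam * (s - r) - lam₁ * r))
        ≤ Real.exp (-lam₁ * s / 2) * (2 / lam) := by
    intro s hs
    have step1 : (∫ r in (0:ℝ)..s, Real.exp (-lam * (s - r) - lam₁ * r))
        ≤ ∫ r in (0:ℝ)..s, Real.exp (-lam₁ * s / 2) * Real.exp (-(lam / 2 * (s - r))) := by
      apply intervalIntegral.integral_mono_on hs
      · exact (Continuous.intervalIntegrable (by continuity) _ _)
      · exact (Continuous.intervalIntegrable (by continuity) _ _)
      · intro r hr
        rw [Set.mem_Icc] at hr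
        rw [← Real.exp_add]
        apply Real.exp_le_exp.2
        nlinarith [hr.1, hr.2, hs]
    have step2 : (∫ r in (0:ℝ)..s, Real.exp (-lam₁ * s / 2) * Real.exp (-(lam / 2 * (s - r))))
        = Real.exp (-lam₁ * s / 2) * ∫ r in (0:ℝ)..s, Real.exp (-(lam / 2 * (s - r))) :=
      intervalIntegral.integral_const_mul _ _
    have step3 := aux_exp_int (lam / 2) s hl2 hs
    have h2l : (lam / 2)⁻¹ = 2 / lam := by field_simp
    calc (∫ r in (0:ℝ)..s, Real.exp (-lam * (s - r) - lam₁ * r))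
        ≤ Real.exp (-lam₁ * s / 2) * ∫ r in (0:ℝ)..s, Real.exp (-(lam / 2 * (s - r))) := by
          rw [← step2]; exact step1
      _ ≤ Real.exp (-lam₁ * s / 2) * (2 / lam) := by
          apply mul_le_mul_of_nonneg_left _ (Real.exp_pos _).le
          rw [← h2l]; exact step3
  -- integrability of LHS
  have hcont : Continuous fun s : ℝ => Real.exp (-lam * (t - s)) *
      ∫ r in (0:ℝ)..s, Real.exp (-lam * (s - r) - lam₁ * r) := by
    have heq : ∀ s : ℝ, (∫ r in (0:ℝ)..s, Real.exp (-lam * (s - r) - lam₁ * r))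
        = Real.exp (-lam * s) * ∫ r in (0:ℝ)..s, Real.exp ((lam - lam₁) * r) := by
      intro s
      rw [← intervalIntegral.integral_const_mul]
      congr 1; ext r
      rw [← Real.exp_add]; ring_nf
    have hprim : Continuous fun s : ℝ => ∫ r in (0:ℝ)..s, Real.exp ((lam - lam₁) * r) :=
      intervalIntegral.continuous_primitive
        (fun a b => (Continuous.intervalIntegrable (by continuity) _ _)) 0
    apply Continuous.mul (by continuity)
    simp only [heq]
    exact Continuous.mul (by continuity) hprim
  -- outer bound
  have outer : (∫ s in (0:ℝ)..t, Real.exp (-lam * (t - s)) *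
      ∫ r in (0:ℝ)..s, Real.exp (-lam * (s - r) - lam₁ * r))
      ≤ ∫ s in (0:ℝ)..t, Real.exp (-lam₁ * t / 2) * (2 / lam) *
          Real.exp (-(lam / 2 * (t - s))) := by
    apply intervalIntegral.integral_mono_on ht
    · exact hcont.intervalIntegrable _ _
    · exact (Continuous.intervalIntegrable (by continuity) _ _)
    · intro s hsm
      rw [Set.mem_Icc] at hsm
      calc Real.exp (-lam * (t - s)) * ∫ r in (0:ℝ)..s, Real.exp (-lam * (s - r) - lam₁ * r)
          ≤ Real.exp (-lam * (t - s)) * (Real.exp (-lam₁ * s / 2) * (2 / lam)) := by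
            apply mul_le_mul_of_nonneg_left (inner_bd s hsm.1) (Real.exp_pos _).le
        _ ≤ Real.exp (-lam₁ * t / 2) * (2 / lam) * Real.exp (-(lam / 2 * (t - s))) := by
            rw [show Real.exp (-lam₁ * t / 2) * (2 / lam) * Real.exp (-(lam / 2 * (t - s)))
                = Real.exp (-lam₁ * t / 2 + -(lam / 2 * (t - s))) * (2 / lam) by
                rw [Real.exp_add]; ring]
            rw [show Real.exp (-lam * (t - s)) * (Real.exp (-lam₁ * s / 2) * (2 / lam))
                = Real.exp (-lam * (t - s) + -lam₁ * s / 2) * (2 / lam) by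
                rw [Real.exp_add]; ring]
            apply mul_le_mul_of_nonneg_right _ (by positivity)
            apply Real.exp_le_exp.2
            nlinarith [hsm.1, hsm.2]
  have step4 : (∫ s in (0:ℝ)..t, Real.exp (-lam₁ * t / 2) * (2 / lam) *
      Real.exp (-(lam / 2 * (t - s))))
      = Real.exp (-lam₁ * t / 2) * (2 / lam) *
        ∫ s in (0:ℝ)..t, Real.exp (-(lam / 2 * (t - s))) :=
    intervalIntegral.integral_const_mul _ _
  have step5 := aux_exp_int (lam / 2) t hl2 ht
  have h2l : (lam / 2)⁻¹ = 2 / lam := by field_simp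
  calc (∫ s in (0:ℝ)..t, Real.exp (-lam * (t - s)) *
        ∫ r in (0:ℝ)..s, Real.exp (-lam * (s - r) - lam₁ * r))
      ≤ Real.exp (-lam₁ * t / 2) * (2 / lam) *
          ∫ s in (0:ℝ)..t, Real.exp (-(lam / 2 * (t - s))) := by rw [← step4]; exact outer
    _ ≤ Real.exp (-lam₁ * t / 2) * (2 / lam) * (2 / lam) := by
        apply mul_le_mul_of_nonneg_left _ (by positivity)
        rw [← h2l]; exact step5
    _ = 4 * lam⁻¹ ^ 2 * Real.exp (-lam₁ * t / 2) := by
        have h4 : (2 / lam) * (2 / lam) = 4 * lam⁻¹ ^ 2 := by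
          ring
        rw [mul_assoc, h4]; ring
end

section
/- Let g : [0,∞) → ℝ be measurable, bounded, and nonnegative, and suppose |g(t)| ≤ C e^{-δ t} for all t ≥ 0 with constants C, δ > 0. Then for all T > 0, |(2/T) ∫₀ᵀ ∫₀^{T−t₁} g(t) dt dt₁ − 2∫₀^∞ g(t) dt| ≤ 4C/(δ² T). -/
/-!
Writing `G s = ∫₀ˢ g` and `I = ∫₀^∞ g`, the substitution `s = T - t₁` turns the double integral
into `∫₀ᵀ G`, so the quantity to bound is `(2/T) ∫₀ᵀ (G s - I) ds`. The integrand is minus the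
tail `∫ₛ^∞ g`, which the exponential decay bounds by `(C/δ) e^{-δ s}`; integrating this over
`[0, T]` gives at most `C/δ²`.
-/

open MeasureTheory Set intervalIntegral Real

section ExpDecay

variable {δ : ℝ}

lemma integral_exp_neg_mul_Ioi (hδ : 0 < δ) (s : ℝ) :
    ∫ t in Ioi s, exp (-δ * t) = exp (-δ * s) / δ := by
  rw [integral_exp_mul_Ioi (neg_lt_zero.2 hδ), div_neg, neg_div, neg_neg]

lemma intervalIntegral_exp_neg_mul_le (hδ : 0 < δ) {a b : ℝ} (hab : a ≤ b) :
    ∫ t in a..b, exp (-δ * t) ≤ exp (-δ * a) / δ := by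
  rw [← integral_Ioi_sub_Ioi (integrableOn_exp_mul_Ioi (neg_lt_zero.2 hδ) a) hab,
    integral_exp_neg_mul_Ioi hδ, integral_exp_neg_mul_Ioi hδ]
  exact sub_le_self _ (by positivity)

variable {f : ℝ → ℝ} {C s : ℝ}

lemma integrableOn_Ioi_of_abs_le_exp (hδ : 0 < δ)
    (hf : AEStronglyMeasurable f (volume.restrict (Ioi s)))
    (hle : ∀ t, s ≤ t → |f t| ≤ C * exp (-δ * t)) : IntegrableOn f (Ioi s) :=
  ((integrableOn_exp_mul_Ioi (neg_lt_zero.2 hδ) s).const_mul C).mono' hf <|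
    (ae_restrict_iff' measurableSet_Ioi).2 <| .of_forall fun t ht => hle t (le_of_lt ht)

lemma abs_integral_Ioi_le_of_abs_le_exp (hδ : 0 < δ)
    (hle : ∀ t, s ≤ t → |f t| ≤ C * exp (-δ * t)) :
    |∫ t in Ioi s, f t| ≤ C / δ * exp (-δ * s) := by
  calc |∫ t in Ioi s, f t| ≤ ∫ t in Ioi s, C * exp (-δ * t) :=
        MeasureTheory.norm_integral_le_of_norm_le (f := f)
          ((integrableOn_exp_mul_Ioi (neg_lt_zero.2 hδ) s).const_mul C)
          ((ae_restrict_iff' measurableSet_Ioi).2 <| .of_forall fun t ht => hle t (le_of_lt ht))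
    _ = C / δ * exp (-δ * s) := by
        rw [MeasureTheory.integral_const_mul, integral_exp_neg_mul_Ioi hδ]; ring

lemma abs_intervalIntegral_sub_mul_le_of_abs_sub_le_exp (hδ : 0 < δ) {G : ℝ → ℝ} {I K a b : ℝ}
    (hab : a ≤ b) (hK : 0 ≤ K) (hG : IntervalIntegrable G volume a b)
    (hle : ∀ s ∈ Icc a b, |G s - I| ≤ K * exp (-δ * s)) :
    |(∫ s in a..b, G s) - (b - a) * I| ≤ K * exp (-δ * a) / δ := by
  have hsub : (∫ s in a..b, G s) - (b - a) * I = ∫ s in a..b, (G s - I) := by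
    rw [integral_sub hG intervalIntegrable_const, intervalIntegral.integral_const, smul_eq_mul]
  calc |(∫ s in a..b, G s) - (b - a) * I|
      ≤ ∫ s in a..b, K * exp (-δ * s) := by
        rw [hsub]
        refine norm_integral_le_of_norm_le (f := fun s => G s - I) hab
          (.of_forall fun s hs => hle s (Ioc_subset_Icc_self hs)) ?_
        exact Continuous.intervalIntegrable (by fun_prop) a b
    _ ≤ K * (exp (-δ * a) / δ) := by
        rw [intervalIntegral.integral_const_mul]
        exact mul_le_mul_of_nonneg_left (intervalIntegral_exp_neg_mul_le hδ hab) hK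
    _ = K * exp (-δ * a) / δ := by ring

end ExpDecay

theorem stmt_3_general (g : ℝ → ℝ) (C δ : ℝ) (hδ : 0 < δ)
    (hmeas : Measurable g)
    (hdecay : ∀ t : ℝ, 0 ≤ t → |g t| ≤ C * Real.exp (-δ * t))
    (T : ℝ) (hT : 0 < T) :
    |(2 / T) * (∫ t₁ in (0:ℝ)..T, ∫ t in (0:ℝ)..(T - t₁), g t) -
        2 * ∫ t in Set.Ioi (0:ℝ), g t| ≤ 4 * C / (δ ^ 2 * T) := by
  have hC : 0 ≤ C := by simpa using (abs_nonneg _).trans (hdecay 0 le_rfl)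
  have hg : IntegrableOn g (Ioi 0) :=
    integrableOn_Ioi_of_abs_le_exp hδ hmeas.aestronglyMeasurable hdecay
  set I := ∫ t in Ioi (0:ℝ), g t
  set G : ℝ → ℝ := fun s => ∫ t in (0:ℝ)..s, g t
  have hreflect : ∫ t₁ in (0:ℝ)..T, G (T - t₁) = ∫ s in (0:ℝ)..T, G s := by
    simp [integral_comp_sub_left]
  have hG : IntervalIntegrable G volume 0 T := by
    refine (continuousOn_primitive_interval ?_).intervalIntegrable
    rw [uIcc_of_le hT.le, integrableOn_Icc_iff_integrableOn_Ioc]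
    exact hg.mono_set Ioc_subset_Ioi_self
  have htail : ∀ s ∈ Icc 0 T, |G s - I| ≤ C / δ * exp (-δ * s) := fun s hs => by
    have hGs : G s = I - ∫ t in Ioi s, g t := (integral_Ioi_sub_Ioi hg hs.1).symm
    rw [hGs, sub_sub_cancel_left, abs_neg]
    exact abs_integral_Ioi_le_of_abs_le_exp hδ fun t ht => hdecay t (hs.1.trans ht)
  have hmean := abs_intervalIntegral_sub_mul_le_of_abs_sub_le_exp hδ hT.le (by positivity) hG htail
  rw [sub_zero, mul_zero, exp_zero, mul_one] at hmean
  calc |(2 / T) * (∫ t₁ in (0:ℝ)..T, G (T - t₁)) - 2 * I|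
      = 2 / T * |(∫ s in (0:ℝ)..T, G s) - T * I| := by
        have hT2 : 2 * I = 2 / T * (T * I) := by field_simp
        rw [hreflect, hT2, ← mul_sub, abs_mul, abs_of_pos (by positivity)]
    _ ≤ 2 / T * (C / δ / δ) := by gcongr
    _ ≤ 4 * C / (δ ^ 2 * T) := by
        rw [show 2 / T * (C / δ / δ) = 2 * C / (δ ^ 2 * T) by field_simp]
        gcongr; norm_num

theorem stmt_3 (g : ℝ → ℝ) (C δ : ℝ) (hC : 0 < C) (hδ : 0 < δ)
    (hmeas : Measurable g) (hbdd : ∃ B : ℝ, ∀ t : ℝ, |g t| ≤ B)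
    (hnonneg : ∀ t : ℝ, 0 ≤ t → 0 ≤ g t)
    (hdecay : ∀ t : ℝ, 0 ≤ t → |g t| ≤ C * Real.exp (-δ * t))
    (T : ℝ) (hT : 0 < T) :
    |(2 / T) * (∫ t₁ in (0:ℝ)..T, ∫ t in (0:ℝ)..(T - t₁), g t) -
        2 * ∫ t in Set.Ioi (0:ℝ), g t| ≤ 4 * C / (δ ^ 2 * T) :=
  stmt_3_general g C δ hδ hmeas hdecay T hT
end

section
/- Let (λ_i)_{i≥1} be positive reals with λ₁ ≤ λ₂ ≤ … and suppose ∑_{i=1}^∞ e^{-tλ_i} = A t^{-2} + O(t^{-1}) as t → 0+, for some A > 0. Then ∑_{i=1}^∞ λ_i^{-2} e^{-2ελ_i} = A log(1/ε) + O(1) as ε → 0+. -/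
open Real Set Filter Topology Asymptotics MeasureTheory

/-!
Let `Θ(t) = ∑ e^{-tλᵢ}` be the heat trace. Since `λ⁻² e^{-aλ} = ∫_a^∞ (t - a) e^{-tλ} dt`,
splitting at a fixed small `b` writes `∑ λᵢ⁻² e^{-aλᵢ}` as `∫_a^b (t - a) Θ(t) dt` plus a tail
that stays bounded as `a → 0` (the `λᵢ` are bounded below because `Θ` is finite). On `(a, b]`,
replacing `Θ(t)` by `A t⁻²` costs `(t - a) · O(t⁻¹) = O(1)`, and
`∫_a^b A (t - a) t⁻² dt = A (log b - log a + a / b - 1) = -A log a + O(1)`. Take `a = 2ε`.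
-/

lemma integral_sub_mul_exp_neg_mul {L : ℝ} (hL : L ≠ 0) (a b : ℝ) :
    ∫ t in a..b, (t - a) * exp (-t * L)
      = (exp (-a * L) - ((b - a) * L + 1) * exp (-b * L)) / L ^ 2 := by
  have hderiv : ∀ t, HasDerivAt (fun t => -((t - a) * L + 1) * exp (-t * L) / L ^ 2)
      ((t - a) * exp (-t * L)) t := fun t =>
    ((((((hasDerivAt_id t).sub_const a).mul_const L).add_const 1).neg.mul
      ((hasDerivAt_id t).neg.mul_const L).exp).div_const (L ^ 2)).congr_deriv (by
        simp only [id, Pi.neg_apply]; field_simp; ring)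
  rw [intervalIntegral.integral_eq_sub_of_hasDerivAt (fun t _ => hderiv t)
    ((Continuous.intervalIntegrable (by fun_prop) a b))]
  field_simp
  ring

lemma integral_sub_div_sq {a b : ℝ} (ha : 0 < a) (hb : 0 < b) :
    ∫ t in a..b, (t - a) / t ^ 2 = log b - log a + a / b - 1 := by
  have hpos : ∀ t ∈ uIcc a b, 0 < t := fun t ht => (lt_min ha hb).trans_le ht.1
  have hderiv : ∀ t ∈ uIcc a b, HasDerivAt (fun t => log t + a * t⁻¹) ((t - a) / t ^ 2) t :=
    fun t ht => ((hasDerivAt_log (hpos t ht).ne').add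
      ((hasDerivAt_inv (hpos t ht).ne').const_mul a)).congr_deriv (by
        field_simp [(hpos t ht).ne']; ring)
  rw [intervalIntegral.integral_eq_sub_of_hasDerivAt hderiv (ContinuousOn.intervalIntegrable ?_)]
  · field_simp
    ring
  · exact ContinuousOn.div (by fun_prop) (by fun_prop) fun t ht => pow_ne_zero 2 (hpos t ht).ne'

lemma tendsto_cofinite_atTop_of_summable_exp_neg_mul {lam : ℕ → ℝ} {t : ℝ} (ht : 0 < t)
    (h : Summable fun i => exp (-t * lam i)) : Tendsto lam cofinite atTop := by
  have h0 : Tendsto (fun i => exp (-t * lam i)) cofinite (𝓝[>] 0) :=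
    tendsto_nhdsWithin_iff.2 ⟨h.tendsto_cofinite_zero, .of_forall fun i => exp_pos _⟩
  have hlog : Tendsto (fun i => -t * lam i) cofinite atBot := by
    simpa [Function.comp_def] using tendsto_log_nhdsGT_zero.comp h0
  refine (hlog.atBot_mul_const_of_neg (neg_neg_of_pos (inv_pos.2 ht))).congr fun i => ?_
  field_simp

noncomputable def heatTrace (lam : ℕ → ℝ) (t : ℝ) : ℝ := ∑' i, exp (-t * lam i)

section HeatTrace

variable {lam : ℕ → ℝ}

lemma summable_exp_neg_mul_of_le (hlam : ∀ i, 0 ≤ lam i) {s t : ℝ}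
    (hs : Summable fun i => exp (-s * lam i)) (hst : s ≤ t) :
    Summable fun i => exp (-t * lam i) :=
  hs.of_nonneg_of_le (fun i => (exp_pos _).le) fun i =>
    exp_le_exp.2 (by nlinarith [hlam i])

lemma summable_exp_neg_mul_of_isBigO (hlam : ∀ i, 0 ≤ lam i) {A : ℝ} (hA : A ≠ 0)
    (htrace : (fun t => heatTrace lam t - A / t ^ 2) =O[𝓝[>] 0] fun t => t⁻¹)
    {t : ℝ} (ht : 0 < t) : Summable fun i => exp (-t * lam i) := by
  -- A divergent trace at time `t` diverges at all earlier times, where `tsum` is then junk `0`,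
  -- so the hypothesis would read `A / s ^ 2 = O(1 / s)`.
  by_contra hns
  have hzero : ∀ s ≤ t, heatTrace lam s = 0 := fun s hs =>
    tsum_eq_zero_of_not_summable fun h => hns (summable_exp_neg_mul_of_le hlam h hs)
  have h1 : (fun s => heatTrace lam s - A / s ^ 2) =ᶠ[𝓝[>] 0] fun s => -A / s ^ 2 := by
    filter_upwards [Ioo_mem_nhdsGT ht] with s hs
    rw [hzero s hs.2.le]
    ring
  have h2 : (fun _ => -A) =O[𝓝[>] 0] fun s : ℝ => s := by
    refine ((htrace.congr' h1 .rfl).mul (isBigO_refl (fun s : ℝ => s ^ 2) _)).congr' ?_ ?_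
    all_goals
      filter_upwards [self_mem_nhdsWithin] with s (hs : 0 < s)
      field_simp
  have h3 : Tendsto (fun _ : ℝ => -A) (𝓝[>] 0) (𝓝 0) :=
    h2.trans_tendsto (tendsto_nhdsWithin_of_tendsto_nhds tendsto_id)
  exact hA (neg_eq_zero.1 (tendsto_const_nhds_iff.1 h3))

lemma continuousOn_heatTrace (hlam : ∀ i, 0 ≤ lam i) {a : ℝ}
    (ha : Summable fun i => exp (-a * lam i)) : ContinuousOn (heatTrace lam) (Ici a) :=
  continuousOn_tsum (fun i => by fun_prop) ha fun i t (ht : a ≤ t) => by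
    rw [norm_of_nonneg (exp_pos _).le]
    exact exp_le_exp.2 (by nlinarith [hlam i])

lemma hasSum_integral_sub_mul_exp_neg_mul (hlam : ∀ i, 0 ≤ lam i) {a b : ℝ}
    (ha : Summable fun i => exp (-a * lam i)) (hab : a ≤ b) :
    HasSum (fun i => ∫ t in a..b, (t - a) * exp (-t * lam i))
      (∫ t in a..b, (t - a) * heatTrace lam t) := by
  refine intervalIntegral.hasSum_integral_of_dominated_convergence
    (fun i _ => (b - a) * exp (-a * lam i))
    (fun i => (by fun_prop : Continuous _).aestronglyMeasurable) (fun i => .of_forall ?_)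
    (.of_forall fun _ _ => ha.mul_left _) intervalIntegrable_const (.of_forall ?_)
  · rintro t ht
    rw [uIoc_of_le hab] at ht
    rw [norm_mul, norm_of_nonneg (sub_nonneg.2 ht.1.le), norm_of_nonneg (exp_pos _).le]
    exact mul_le_mul (by linarith [ht.2]) (exp_le_exp.2 (by nlinarith [hlam i, ht.1]))
      (exp_pos _).le (by linarith [ht.1])
  · rintro t ht
    rw [uIoc_of_le hab] at ht
    exact ((summable_exp_neg_mul_of_le hlam ha ht.1.le).hasSum).mul_left (t - a)

lemma sub_mul_add_one_div_sq_le {m L a b : ℝ} (hm : 0 < m) (hmL : m ≤ L) (ha : 0 ≤ a)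
    (hab : a ≤ b) : ((b - a) * L + 1) / L ^ 2 ≤ b / m + 1 / m ^ 2 := by
  have hL : 0 < L := hm.trans_le hmL
  calc ((b - a) * L + 1) / L ^ 2 = (b - a) / L + 1 / L ^ 2 := by field_simp
    _ ≤ b / m + 1 / m ^ 2 := by
      gcongr
      · linarith
      · linarith

lemma abs_tsum_sub_integral_le {m : ℝ} (hm : 0 < m) (hlam : ∀ i, m ≤ lam i) {a b : ℝ}
    (ha : 0 ≤ a) (hab : a ≤ b) (hsa : Summable fun i => exp (-a * lam i)) :
    |∑' i, (lam i ^ 2)⁻¹ * exp (-a * lam i) - ∫ t in a..b, (t - a) * heatTrace lam t|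
      ≤ (b / m + 1 / m ^ 2) * heatTrace lam b := by
  have hlam0 : ∀ i, 0 ≤ lam i := fun i => hm.le.trans (hlam i)
  set K : ℕ → ℝ := fun i => ((b - a) * lam i + 1) * exp (-b * lam i) / lam i ^ 2
  have hK0 : ∀ i, 0 ≤ K i := fun i => by
    have := hlam0 i
    have : 0 ≤ b - a := sub_nonneg.2 hab
    positivity
  have hKle : ∀ i, K i ≤ (b / m + 1 / m ^ 2) * exp (-b * lam i) := fun i => by
    rw [show K i = ((b - a) * lam i + 1) / lam i ^ 2 * exp (-b * lam i) by ring]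
    exact mul_le_mul_of_nonneg_right (sub_mul_add_one_div_sq_le hm (hlam i) ha hab)
      (exp_pos _).le
  have hsb : Summable fun i => exp (-b * lam i) := summable_exp_neg_mul_of_le hlam0 hsa hab
  have hKsum : Summable K := .of_nonneg_of_le hK0 hKle (hsb.mul_left _)
  have hsplit : HasSum (fun i => (lam i ^ 2)⁻¹ * exp (-a * lam i))
      ((∫ t in a..b, (t - a) * heatTrace lam t) + ∑' i, K i) := by
    convert (hasSum_integral_sub_mul_exp_neg_mul hlam0 hsa hab).add hKsum.hasSum using 2
      with i
    rw [integral_sub_mul_exp_neg_mul (hm.trans_le (hlam i)).ne']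
    ring
  rw [hsplit.tsum_eq, add_sub_cancel_left, abs_of_nonneg (tsum_nonneg hK0), heatTrace,
    ← tsum_mul_left]
  exact hKsum.tsum_le_tsum hKle (hsb.mul_left _)

lemma abs_integral_sub_mul_heatTrace_sub_le (hlam : ∀ i, 0 ≤ lam i) {A C a b : ℝ}
    (ha : 0 < a) (hab : a ≤ b) (hsa : Summable fun i => exp (-a * lam i))
    (hbound : ∀ t ∈ Ioc 0 b, |heatTrace lam t - A / t ^ 2| ≤ C / t) :
    |(∫ t in a..b, (t - a) * heatTrace lam t) - A * (log b - log a + a / b - 1)|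
      ≤ C * (b - a) := by
  have hpos : ∀ t ∈ uIcc a b, 0 < t := fun t ht => ha.trans_le (uIcc_of_le hab ▸ ht).1
  have hint₁ : IntervalIntegrable (fun t => (t - a) * heatTrace lam t) volume a b :=
    ContinuousOn.intervalIntegrable ((continuous_sub_right a).continuousOn.mul
      ((continuousOn_heatTrace hlam hsa).mono (uIcc_of_le hab ▸ Icc_subset_Ici_self)))
  have hint₂ : IntervalIntegrable (fun t => A * ((t - a) / t ^ 2)) volume a b :=
    ContinuousOn.intervalIntegrable (continuousOn_const.mul (ContinuousOn.div (by fun_prop)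
      (by fun_prop) fun t ht => pow_ne_zero 2 (hpos t ht).ne'))
  rw [← integral_sub_div_sq ha (ha.trans_le hab), ← intervalIntegral.integral_const_mul,
    ← intervalIntegral.integral_sub hint₁ hint₂, ← Real.norm_eq_abs,
    ← abs_of_nonneg (sub_nonneg.2 hab)]
  refine intervalIntegral.norm_integral_le_of_norm_le_const fun t ht => ?_
  rw [uIoc_of_le hab] at ht
  have ht0 : 0 < t := ha.trans ht.1
  calc ‖(t - a) * heatTrace lam t - A * ((t - a) / t ^ 2)‖
      = (t - a) * |heatTrace lam t - A / t ^ 2| := by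
        rw [show (t - a) * heatTrace lam t - A * ((t - a) / t ^ 2)
            = (t - a) * (heatTrace lam t - A / t ^ 2) by ring, norm_mul, Real.norm_eq_abs,
          Real.norm_eq_abs, abs_of_nonneg (sub_nonneg.2 ht.1.le)]
    _ ≤ t * (C / t) := by
        gcongr
        · linarith
        · exact hbound t ⟨ht0, ht.2⟩
    _ = C := by field_simp

theorem isBigO_tsum_inv_sq_mul_exp_neg_mul_add_log {m : ℝ} (hm : 0 < m) (hlam : ∀ i, m ≤ lam i)
    (hsum : ∀ t > 0, Summable fun i => exp (-t * lam i)) {A : ℝ}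
    (htrace : (fun t => heatTrace lam t - A / t ^ 2) =O[𝓝[>] 0] fun t => t⁻¹) :
    (fun a => ∑' i, (lam i ^ 2)⁻¹ * exp (-a * lam i) + A * log a)
      =O[𝓝[>] 0] fun _ => (1 : ℝ) := by
  have hlam0 : ∀ i, 0 ≤ lam i := fun i => hm.le.trans (hlam i)
  obtain ⟨C, hC0, hC⟩ := htrace.exists_pos
  obtain ⟨b, hb, hCb⟩ := mem_nhdsGT_iff_exists_Ioc_subset.1 hC.bound
  have hbound : ∀ t ∈ Ioc 0 b, |heatTrace lam t - A / t ^ 2| ≤ C / t := fun t ht => by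
    simpa [abs_of_pos ht.1, div_eq_mul_inv] using hCb ht
  refine .of_bound ((b / m + 1 / m ^ 2) * heatTrace lam b + C * b + |A| * (|log b| + 1)) ?_
  filter_upwards [Ioc_mem_nhdsGT hb] with a ⟨ha, hab⟩
  have htail := abs_tsum_sub_integral_le hm hlam ha.le hab (hsum a ha)
  have hmain := abs_integral_sub_mul_heatTrace_sub_le hlam0 ha hab (hsum a ha) hbound
  have hlog : |A * (log b + a / b - 1)| ≤ |A| * (|log b| + 1) := by
    rw [abs_mul]
    gcongr
    have : a / b ≤ 1 := div_le_one_of_le₀ hab hb.le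
    have : 0 < a / b := div_pos ha hb
    rw [abs_le] at *
    constructor <;> linarith [le_abs_self (log b), neg_abs_le (log b)]
  rw [norm_one, mul_one, Real.norm_eq_abs]
  calc _ = |(∑' i, (lam i ^ 2)⁻¹ * exp (-a * lam i) - ∫ t in a..b, (t - a) * heatTrace lam t)
          + ((∫ t in a..b, (t - a) * heatTrace lam t) - A * (log b - log a + a / b - 1))
          + A * (log b + a / b - 1)| := by congr 1; ring
    _ ≤ _ := (abs_add_three _ _ _).trans (by nlinarith)

end HeatTrace

theorem stmt_6_general (lam : ℕ → ℝ) (hpos : ∀ i, 0 < lam i)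
    (A : ℝ) (hA : 0 < A)
    (htrace : (fun t : ℝ => (∑' i, Real.exp (-t * lam i)) - A / t ^ 2)
      =O[nhdsWithin 0 (Set.Ioi 0)] fun t : ℝ => t⁻¹) :
    (fun ε : ℝ => (∑' i, ((lam i) ^ 2)⁻¹ * Real.exp (-2 * ε * lam i)) - A * Real.log (1 / ε))
      =O[nhdsWithin 0 (Set.Ioi 0)] fun _ : ℝ => (1 : ℝ) := by
  have hsum : ∀ t > 0, Summable fun i => exp (-t * lam i) := fun t ht =>
    summable_exp_neg_mul_of_isBigO (fun i => (hpos i).le) hA.ne' htrace ht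
  obtain ⟨i₀, hi₀⟩ :=
    (tendsto_cofinite_atTop_of_summable_exp_neg_mul one_pos (hsum 1 one_pos)).exists_forall_le
  have hdouble : Tendsto (fun ε : ℝ => 2 * ε) (𝓝[>] 0) (𝓝[>] 0) :=
    tendsto_nhdsWithin_iff.2
      ⟨by simpa using ((continuous_const_mul (2 : ℝ)).tendsto 0).mono_left nhdsWithin_le_nhds,
        eventually_mem_nhdsWithin.mono fun ε (hε : 0 < ε) => mul_pos two_pos hε⟩
  refine (((isBigO_tsum_inv_sq_mul_exp_neg_mul_add_log (hpos i₀) hi₀ hsum htrace).comp_tendsto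
    hdouble).sub (isBigO_const_one ℝ (A * log 2) _)).congr' ?_ .rfl
  filter_upwards [self_mem_nhdsWithin] with ε (hε : 0 < ε)
  simp only [Function.comp_apply, neg_mul, one_div, log_inv, log_mul two_ne_zero hε.ne']
  ring

theorem stmt_6 (lam : ℕ → ℝ) (hpos : ∀ i, 0 < lam i) (hmono : Monotone lam)
    (A : ℝ) (hA : 0 < A)
    (htrace : (fun t : ℝ => (∑' i, Real.exp (-t * lam i)) - A / t ^ 2)
      =O[nhdsWithin 0 (Set.Ioi 0)] fun t : ℝ => t⁻¹) :
    (fun ε : ℝ => (∑' i, ((lam i) ^ 2)⁻¹ * Real.exp (-2 * ε * lam i)) - A * Real.log (1 / ε))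
      =O[nhdsWithin 0 (Set.Ioi 0)] fun _ : ℝ => (1 : ℝ) :=
  stmt_6_general lam hpos A hA htrace
end
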